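/- arXiv:1012.0191 — 6 statements merged into one kernel-verified Lean document; each statement's English description precedes it below -/
import Mathlib

section
/- Let a ≥ 2 be an integer, T_a : ℝ/ℤ → ℝ/ℤ the map x ↦ a·x, and A ⊆ ℝ/ℤ a closed set with T_a(A) ⊆ A. Then the topological entropy of T_a restricted to A is at least (upper box dimension of A) · log a. -/
open Filter Topology

/-- A finite subset `B` of the circle is `ε`-separated. -/
def IsSeparated (ε : ℝ) (B : Finset UnitAddCircle) : Prop :=
  ∀ x ∈ B, ∀ y ∈ B, x ≠ y → ε ≤ ‖x - y‖

/-- `sepCount A ε` is the maximal cardinality of an `ε`-separated subset of `A`. -/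
noncomputable def sepCount (A : Set UnitAddCircle) (ε : ℝ) : ℕ :=
  sSup {n : ℕ | ∃ B : Finset UnitAddCircle, ↑B ⊆ A ∧ IsSeparated ε B ∧ B.card = n}

/-- The upper box dimension of `A ⊆ ℝ/ℤ`:
`limsup_{ε → 0⁺} log s(A,ε) / log (1/ε)`. -/
noncomputable def upperBoxDim (A : Set UnitAddCircle) : ℝ :=
  limsup (fun ε : ℝ => Real.log (sepCount A ε) / Real.log (1 / ε)) (𝓝[>] 0)

/-- A finite subset `B` is `(n,ε)`-separated with respect to `T`. -/
def IsDynSeparated (T : UnitAddCircle → UnitAddCircle) (n : ℕ) (ε : ℝ)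
    (B : Finset UnitAddCircle) : Prop :=
  ∀ x ∈ B, ∀ y ∈ B, x ≠ y → ∃ i < n, ε ≤ ‖T^[i] x - T^[i] y‖

/-- `dynSepCount T A n ε` is the maximal cardinality of an `(n,ε)`-separated subset of `A`
with respect to `T`. -/
noncomputable def dynSepCount (T : UnitAddCircle → UnitAddCircle) (A : Set UnitAddCircle)
    (n : ℕ) (ε : ℝ) : ℕ :=
  sSup {m : ℕ | ∃ B : Finset UnitAddCircle, ↑B ⊆ A ∧ IsDynSeparated T n ε B ∧ B.card = m}

/-- The topological entropy of `T` restricted to `A`, defined via separated sets: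
`h_top(T) = lim_{ε→0⁺} limsup_{n→∞} (log s_n(T,ε))/n`. -/
noncomputable def topEntropy (T : UnitAddCircle → UnitAddCircle) (A : Set UnitAddCircle) : ℝ :=
  limsup (fun ε : ℝ =>
    limsup (fun n : ℕ => Real.log (dynSepCount T A n ε) / n) atTop) (𝓝[>] (0 : ℝ))

/-!
Multiplication by `a` expands distances below `1 / (2a)` exactly by the factor `a`, so for
`ε ≤ 1 / (2a)` two points at distance at least `ε / aⁿ` are `ε` apart at one of their first
`n + 1` iterates: `s(A, ε / aⁿ) ≤ sₙ₊₁(T_a, ε)`. For `ε ≤ a⁻²` and a scale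
`δ ∈ (ε / aⁿ⁺¹, ε / aⁿ]` we also have `log (1 / δ) ≥ (n + 2) log a`, so
`log s(A, δ) / log (1 / δ) ≤ log sₙ₊₂(T_a, ε) / ((n + 2) log a)`; as `δ → 0` the index `n`
tends to infinity, which gives `dim A · log a ≤ limsupₙ log sₙ(T_a, ε) / n`. The bound
`sₙ(T_a, ε) ≤ ⌈aⁿ / ε⌉` keeps these inner limsups below `log a`, so the outer limsup is
that of a bounded function.
-/

open Real

section MaxCard

variable {α : Type*} {A : Set α} {P Q : Finset α → Prop} {N : ℕ}

/-- `sepCount A ε` and `dynSepCount T A n ε` are definitionally `maxCard A (IsSeparated ε)` and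
`maxCard A (IsDynSeparated T n ε)`; the value is the junk `0` when the cardinalities are
unbounded. -/
noncomputable def maxCard (A : Set α) (P : Finset α → Prop) : ℕ :=
  sSup {n : ℕ | ∃ B : Finset α, ↑B ⊆ A ∧ P B ∧ B.card = n}

lemma maxCard_le (h : ∀ B, P B → B.card ≤ N) : maxCard A P ≤ N :=
  csSup_le' <| by rintro _ ⟨B, -, hB, rfl⟩; exact h B hB

lemma maxCard_mono (hPQ : ∀ B, P B → Q B) (hQ : ∀ B, Q B → B.card ≤ N) :
    maxCard A P ≤ maxCard A Q :=
  csSup_le_csSup' ⟨N, by rintro _ ⟨B, -, hB, rfl⟩; exact hQ B hB⟩ <| by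
    rintro _ ⟨B, hBA, hB, rfl⟩; exact ⟨B, hBA, hPQ B hB, rfl⟩

end MaxCard

namespace UnitAddCircle

lemma norm_coe_le_abs (r : ℝ) : ‖(r : UnitAddCircle)‖ ≤ |r| := by
  simpa [norm_eq] using round_le r 0

lemma exists_coe_eq_abs_eq_norm (z : UnitAddCircle) :
    ∃ r : ℝ, (r : UnitAddCircle) = z ∧ |r| = ‖z‖ := by
  obtain ⟨r, rfl⟩ := QuotientAddGroup.mk_surjective z
  exact ⟨r - round r, by simp, norm_eq.symm⟩

lemma norm_nsmul_of_two_mul_norm_le {a : ℕ} {z : UnitAddCircle} (hz : 2 * a * ‖z‖ ≤ 1) :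
    ‖a • z‖ = a * ‖z‖ := by
  obtain ⟨r, rfl, hr⟩ := exists_coe_eq_abs_eq_norm z
  rw [← hr] at hz ⊢
  have hsmul : a • (r : UnitAddCircle) = ((a * r : ℝ) : UnitAddCircle) := by
    rw [← nsmul_eq_mul, QuotientAddGroup.mk_nsmul]
  have har : |(a : ℝ) * r| ≤ |(1 : ℝ)| / 2 := by
    rw [abs_mul, Nat.abs_cast, abs_one]; linarith
  rw [hsmul, (AddCircle.norm_coe_eq_abs_iff 1 one_ne_zero).2 har, abs_mul, Nat.abs_cast]

lemma exists_le_norm_pow_smul {a : ℕ} {ε : ℝ} (hε : 2 * a * ε ≤ 1) (n : ℕ) (z : UnitAddCircle)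
    (hz : ε ≤ a ^ n * ‖z‖) : ∃ i ≤ n, ε ≤ ‖a ^ i • z‖ := by
  induction n generalizing z with
  | zero => exact ⟨0, le_rfl, by simpa using hz⟩
  | succ n ih =>
    by_cases hsmall : 2 * a * ‖z‖ ≤ 1
    · obtain ⟨i, hi, hεi⟩ := ih (a • z) <| by
        rwa [norm_nsmul_of_two_mul_norm_le hsmall, ← mul_assoc, ← pow_succ]
      exact ⟨i + 1, by omega, by rwa [pow_succ, mul_smul]⟩
    · refine ⟨0, (n + 1).zero_le, ?_⟩
      have ha : (0 : ℝ) ≤ a := a.cast_nonneg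
      rw [pow_zero, one_smul]
      nlinarith

end UnitAddCircle

lemma IsSeparated.card_le {δ : ℝ} (hδ : 0 < δ) {B : Finset UnitAddCircle}
    (hB : IsSeparated δ B) : B.card ≤ ⌈1 / δ⌉₊ := by
  set u : UnitAddCircle → ℝ := fun z => AddCircle.equivIco 1 0 z
  have hu : ∀ z, u z ∈ Set.Ico 0 1 := fun z => by simpa using (AddCircle.equivIco 1 0 z).2
  have hbox : ∀ z ∈ B, ⌊u z / δ⌋₊ ∈ Finset.range ⌈1 / δ⌉₊ := fun z _ => by
    rw [Finset.mem_range, Nat.floor_lt (div_nonneg (hu z).1 hδ.le)]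
    calc u z / δ < 1 / δ := by gcongr; exact (hu z).2
      _ ≤ ⌈1 / δ⌉₊ := Nat.le_ceil _
  have hinj : Set.InjOn (fun z => ⌊u z / δ⌋₊) B := by
    intro x hx y hy hxy
    by_contra hne
    have hclose : |u x / δ - u y / δ| < 1 := by
      refine Int.abs_sub_lt_one_of_floor_eq_floor ?_
      rw [← Int.natCast_floor_eq_floor (div_nonneg (hu x).1 hδ.le),
        ← Int.natCast_floor_eq_floor (div_nonneg (hu y).1 hδ.le)]
      exact congrArg _ hxy
    rw [← sub_div, abs_div, abs_of_pos hδ, div_lt_one hδ] at hclose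
    have hcoe : ∀ z, ((u z : ℝ) : UnitAddCircle) = z := (AddCircle.equivIco 1 0).symm_apply_apply
    have hnorm : ‖x - y‖ < δ := by
      calc ‖x - y‖ = ‖((u x - u y : ℝ) : UnitAddCircle)‖ := by
            rw [AddCircle.coe_sub, hcoe, hcoe]
        _ ≤ |u x - u y| := UnitAddCircle.norm_coe_le_abs _
        _ < δ := hclose
    exact (hB x hx y hy hne).not_gt hnorm
  simpa using Finset.card_le_card_of_injOn _ hbox hinj

section Counting

variable {a : ℕ} {A : Set UnitAddCircle} {n : ℕ} {ε δ : ℝ}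

lemma IsDynSeparated.isSeparated_div_pow (ha : 1 ≤ a) {B : Finset UnitAddCircle}
    (hB : IsDynSeparated (a • ·) n ε B) : IsSeparated (ε / a ^ n) B := by
  intro x hx y hy hne
  obtain ⟨i, hi, hεi⟩ := hB x hx y hy hne
  have ha' : (1 : ℝ) ≤ a := by exact_mod_cast ha
  rw [div_le_iff₀' (by positivity)]
  calc ε ≤ ‖(a ^ i) • (x - y)‖ := by simpa only [smul_iterate, smul_sub] using hεi
    _ ≤ (a : ℝ) ^ i * ‖x - y‖ := by simpa using norm_nsmul_le (n := a ^ i) (a := x - y)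
    _ ≤ (a : ℝ) ^ n * ‖x - y‖ := by gcongr

lemma IsSeparated.isDynSeparated_succ (ha : 0 < a) (hε : 2 * a * ε ≤ 1)
    {B : Finset UnitAddCircle} (hB : IsSeparated (ε / a ^ n) B) :
    IsDynSeparated (a • ·) (n + 1) ε B := by
  intro x hx y hy hne
  have hsep : ε ≤ a ^ n * ‖x - y‖ := by
    rw [← div_le_iff₀' (by positivity)]; exact hB x hx y hy hne
  obtain ⟨i, hi, hεi⟩ := UnitAddCircle.exists_le_norm_pow_smul hε n (x - y) hsep
  exact ⟨i, Nat.lt_succ_of_le hi, by simpa only [smul_iterate, smul_sub] using hεi⟩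

lemma sepCount_anti (hδ : 0 < δ) (hδε : δ ≤ ε) : sepCount A ε ≤ sepCount A δ :=
  maxCard_mono (fun _ hB x hx y hy hne => hδε.trans (hB x hx y hy hne))
    fun _ hB => hB.card_le hδ

lemma dynSepCount_le (ha : 1 ≤ a) (hε : 0 < ε) :
    dynSepCount (a • ·) A n ε ≤ ⌈a ^ n / ε⌉₊ :=
  maxCard_le fun _ hB => by
    simpa [one_div_div] using (hB.isSeparated_div_pow ha).card_le (by positivity)

lemma sepCount_div_pow_le_dynSepCount (ha : 0 < a) (hε : 0 < ε) (haε : 2 * a * ε ≤ 1) :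
    sepCount A (ε / a ^ n) ≤ dynSepCount (a • ·) A (n + 1) ε :=
  maxCard_mono (fun _ hB => hB.isDynSeparated_succ ha haε)
    fun _ hB => (hB.isSeparated_div_pow ha).card_le (by positivity)

end Counting

lemma log_natCast_le_log_of_le {m : ℕ} {y : ℝ} (h : (m : ℝ) ≤ y) (hy : 0 ≤ log y) :
    log m ≤ log y := by
  rcases m.eq_zero_or_pos with rfl | hm
  · simpa using hy
  · exact log_le_log (by exact_mod_cast hm) h

lemma tendsto_const_add_div_natCast (c C : ℝ) :
    Tendsto (fun n : ℕ => c + C / n) atTop (𝓝 c) := by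
  simpa using (tendsto_const_div_atTop_nhds_zero_nat C).const_add c

section Entropy

variable {a : ℕ} {A : Set UnitAddCircle} {ε δ : ℝ}

lemma log_dynSepCount_div_le (ha : 1 ≤ a) (hε : 0 < ε) (hε1 : ε ≤ 1) (n : ℕ) :
    log (dynSepCount (a • ·) A n ε) / n ≤ log a + log (2 / ε) / n := by
  have ha' : (1 : ℝ) ≤ a := by exact_mod_cast ha
  have hla : 0 ≤ log a := log_nonneg ha'
  have hlogε : 0 ≤ log (2 / ε) := log_nonneg (by rw [le_div_iff₀ hε]; linarith)
  rcases n.eq_zero_or_pos with rfl | hn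
  · simpa using hla
  have hcount : (dynSepCount (a • ·) A n ε : ℝ) ≤ 2 / ε * a ^ n := by
    have hbig : (1 : ℝ) ≤ a ^ n / ε := by
      rw [le_div_iff₀ hε]; nlinarith [one_le_pow₀ (n := n) ha']
    calc (dynSepCount (a • ·) A n ε : ℝ) ≤ ⌈(a : ℝ) ^ n / ε⌉₊ := by
          exact_mod_cast dynSepCount_le ha hε
      _ ≤ 2 * (a ^ n / ε) := (Nat.ceil_lt_two_mul (by linarith)).le
      _ = 2 / ε * a ^ n := by ring
  have hlog : log (dynSepCount (a • ·) A n ε) ≤ log (2 / ε) + n * log a := by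
    rw [← log_pow, ← log_mul (by positivity) (by positivity)]
    exact log_natCast_le_log_of_le hcount <| by
      rw [log_mul (by positivity) (by positivity), log_pow]; positivity
  rw [div_le_iff₀ (by exact_mod_cast hn), add_mul, div_mul_cancel₀ _ (by positivity)]
  linarith

lemma isBoundedUnder_log_dynSepCount_div (ha : 1 ≤ a) (hε : 0 < ε) (hε1 : ε ≤ 1) :
    IsBoundedUnder (· ≤ ·) atTop fun n : ℕ => log (dynSepCount (a • ·) A n ε) / n :=
  (tendsto_const_add_div_natCast _ _).isBoundedUnder_le.mono_le
    (Eventually.of_forall (log_dynSepCount_div_le ha hε hε1))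

lemma limsup_log_dynSepCount_div_le (ha : 1 ≤ a) (hε : 0 < ε) (hε1 : ε ≤ 1) :
    limsup (fun n : ℕ => log (dynSepCount (a • ·) A n ε) / n) atTop ≤ log a := by
  have htend := tendsto_const_add_div_natCast (log a) (log (2 / ε))
  rw [← htend.limsup_eq]
  exact limsup_le_limsup (Eventually.of_forall (log_dynSepCount_div_le ha hε hε1))
    (isCoboundedUnder_le_of_le _ fun n => by positivity) htend.isBoundedUnder_le

lemma log_sepCount_div_le (ha : 2 ≤ a) (hε : 0 < ε) (haε : a ^ 2 * ε ≤ 1) (hδ : 0 < δ)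
    {n : ℕ} (hlow : a ^ n ≤ ε / δ) (hup : ε / δ < a ^ (n + 1)) :
    log (sepCount A δ) / log (1 / δ) ≤
      log (dynSepCount (a • ·) A (n + 2) ε) / (n + 2 : ℕ) / log a := by
  have ha' : (2 : ℝ) ≤ a := by exact_mod_cast ha
  have hla : 0 < log a := log_pos (by linarith)
  have hcount : sepCount A δ ≤ dynSepCount (a • ·) A (n + 2) ε := by
    have hδ' : ε / a ^ (n + 1) ≤ δ := by
      rw [div_lt_iff₀ hδ] at hup; rw [div_le_iff₀ (by positivity)]; linarith
    exact (sepCount_anti (by positivity) hδ').trans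
      (sepCount_div_pow_le_dynSepCount (by omega) hε (by nlinarith))
  have hscale : (n + 2 : ℕ) * log a ≤ log (1 / δ) := by
    rw [← log_pow]
    refine log_le_log (by positivity) ?_
    rw [le_div_iff₀ hδ, pow_add, mul_comm (_ ^ n), mul_assoc]
    rw [le_div_iff₀ hδ] at hlow
    calc (a : ℝ) ^ 2 * (a ^ n * δ) ≤ a ^ 2 * ε := by gcongr
      _ ≤ 1 := haε
  calc log (sepCount A δ) / log (1 / δ)
      ≤ log (sepCount A δ) / ((n + 2 : ℕ) * log a) :=
        div_le_div_of_nonneg_left (log_natCast_nonneg _) (by positivity) hscale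
    _ ≤ log (dynSepCount (a • ·) A (n + 2) ε) / ((n + 2 : ℕ) * log a) := by
        gcongr ?_ / _
        exact log_natCast_le_log_of_le (by exact_mod_cast hcount) (log_natCast_nonneg _)
    _ = log (dynSepCount (a • ·) A (n + 2) ε) / (n + 2 : ℕ) / log a := by rw [div_div]

lemma isCoboundedUnder_log_sepCount_div :
    IsCoboundedUnder (· ≤ ·) (𝓝[>] 0) fun δ => log (sepCount A δ) / log (1 / δ) := by
  refine isCoboundedUnder_le_of_eventually_le _ (x := 0) ?_
  filter_upwards [Ioo_mem_nhdsGT one_pos] with δ hδ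
  exact div_nonneg (log_natCast_nonneg _)
    (log_nonneg (by rw [le_div_iff₀ hδ.1]; linarith [hδ.2]))

lemma upperBoxDim_mul_log_le_limsup (ha : 2 ≤ a) (hε : 0 < ε) (haε : a ^ 2 * ε ≤ 1) :
    upperBoxDim A * log a ≤
      limsup (fun n : ℕ => log (dynSepCount (a • ·) A n ε) / n) atTop := by
  have ha' : (1 : ℝ) < a := by exact_mod_cast ha
  have hla : 0 < log a := log_pos ha'
  have hε1 : ε ≤ 1 := by nlinarith [one_le_pow₀ (n := 2) ha'.le]
  refine le_of_forall_lt_imp_le_of_dense fun c hc => ?_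
  have hfreq : ∃ᶠ δ in 𝓝[>] 0, c / log a < log (sepCount A δ) / log (1 / δ) :=
    frequently_lt_of_lt_limsup isCoboundedUnder_log_sepCount_div (by rwa [div_lt_iff₀ hla])
  refine le_limsup_of_frequently_le (frequently_atTop.2 fun N => ?_)
    (isBoundedUnder_log_dynSepCount_div (by omega) hε hε1)
  obtain ⟨δ, hδc, hδ0, hδN⟩ := (hfreq.and_eventually
    (Ioo_mem_nhdsGT (by positivity : 0 < ε / a ^ (N + 1)))).exists
  have hδε : 1 ≤ ε / δ := by
    rw [le_div_iff₀ hδ0, one_mul]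
    exact hδN.le.trans (div_le_self hε.le (one_le_pow₀ ha'.le))
  obtain ⟨n, hlow, hup⟩ := exists_nat_pow_near hδε ha'
  refine ⟨n + 2, ?_, ?_⟩
  · have hNn : (a : ℝ) ^ (N + 1) < a ^ (n + 1) := by
      refine lt_trans ?_ hup
      rwa [lt_div_iff₀ hδ0, ← lt_div_iff₀' (by positivity)]
    have := (pow_lt_pow_iff_right₀ ha').1 hNn
    omega
  · have := hδc.trans_le (log_sepCount_div_le ha hε haε hδ0 hlow hup)
    exact ((div_lt_div_iff_of_pos_right hla).1 this).le

end Entropy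

theorem topEntropy_ge_dim_mul_log_general (a : ℕ) (ha : 2 ≤ a) (A : Set UnitAddCircle) :
    upperBoxDim A * Real.log a ≤ topEntropy (fun x : UnitAddCircle => a • x) A := by
  have ha2 : (0 : ℝ) < a ^ 2 := by positivity
  refine le_limsup_of_frequently_le (Eventually.frequently ?_) ⟨log a, eventually_map.2 ?_⟩
  · filter_upwards [Ioo_mem_nhdsGT (one_div_pos.2 ha2)] with ε hε
    exact upperBoxDim_mul_log_le_limsup ha hε.1 ((le_div_iff₀' ha2).1 hε.2.le)
  · filter_upwards [Ioo_mem_nhdsGT one_pos] with ε hε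
    exact limsup_log_dynSepCount_div_le (by omega) hε.1 hε.2.le

/-- If `a ≥ 2`, `T_a x = a • x` on `ℝ/ℤ`, and `A` is a closed `T_a`-invariant set, then the
topological entropy of `T_a` restricted to `A` is at least `(upper box dimension of A) · log a`. -/
theorem topEntropy_ge_dim_mul_log (a : ℕ) (ha : 2 ≤ a) (A : Set UnitAddCircle)
    (hclosed : IsClosed A) (hinv : (fun x : UnitAddCircle => a • x) '' A ⊆ A) :
    upperBoxDim A * Real.log a ≤ topEntropy (fun x : UnitAddCircle => a • x) A :=
  topEntropy_ge_dim_mul_log_general a ha A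
end

section
/- Let a ≥ 2 be a natural number and α, β ∈ ℝ/ℤ. If ‖α - β‖ ≥ a^{-n} for some n ≥ 1, then there exists an integer ℓ with 0 ≤ ℓ < n such that ‖a^ℓ α - a^ℓ β‖ ≥ 1/(2a). -/
/-!
If all of `γ, aγ, …, a^{n-1}γ` (with `γ = α - β`) had norm `< 1/(2a)`, multiplication by `a` would
never wrap around the circle, so `‖a^n γ‖ = a^n ‖γ‖ ≥ 1`; but no element of `ℝ/ℤ` has norm above `1/2`.
-/

namespace AddCircle

variable {p : ℝ}

theorem norm_nsmul_eq_mul_norm (hp : p ≠ 0) {k : ℕ} {x : AddCircle p}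
    (h : k * ‖x‖ ≤ |p| / 2) : ‖k • x‖ = k * ‖x‖ := by
  induction x using QuotientAddGroup.induction_on with
  | H r =>
    set s := r - round (p⁻¹ * r) * p
    have hrs : (r : AddCircle p) = s := by
      rw [coe_sub, eq_sub_iff_add_eq, add_eq_left, coe_eq_zero_iff]
      exact ⟨round (p⁻¹ * r), zsmul_eq_mul _ _⟩
    have hnorm : ‖(r : AddCircle p)‖ = |s| := norm_eq p
    rw [hnorm] at h ⊢
    have hks : |(k * s : ℝ)| = k * |s| := by rw [abs_mul, Nat.abs_cast]
    rw [hrs, ← coe_nsmul, nsmul_eq_mul, (norm_coe_eq_abs_iff p hp).mpr (hks ▸ h), hks]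

theorem norm_pow_nsmul_eq_pow_mul_norm (hp : p ≠ 0) {a n : ℕ} {x : AddCircle p}
    (h : ∀ ℓ < n, a * ‖a ^ ℓ • x‖ ≤ |p| / 2) : ‖a ^ n • x‖ = a ^ n * ‖x‖ := by
  induction n with
  | zero => simp
  | succ n ih =>
    have ih := ih fun ℓ hℓ => h ℓ (by omega)
    rw [pow_succ', mul_smul, norm_nsmul_eq_mul_norm hp (h n n.lt_succ_self), ih]
    ring

end AddCircle

theorem exists_iterate_separated_general (a : ℕ) (ha : 2 ≤ a) (α β : UnitAddCircle) (n : ℕ)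
    (h : ((a : ℝ) ^ n)⁻¹ ≤ ‖α - β‖) :
    ∃ ℓ < n, 1 / (2 * (a : ℝ)) ≤ ‖a ^ ℓ • α - a ^ ℓ • β‖ := by
  by_contra! hclose
  have ha₀ : (0 : ℝ) < a := by positivity
  have hsmall : ∀ ℓ < n, (a : ℝ) * ‖a ^ ℓ • (α - β)‖ ≤ |(1 : ℝ)| / 2 := fun ℓ hℓ => by
    have := smul_sub (a ^ ℓ) α β ▸ hclose ℓ hℓ
    rw [abs_one, ← le_div_iff₀' ha₀, div_div]
    exact this.le
  have hiter := AddCircle.norm_pow_nsmul_eq_pow_mul_norm one_ne_zero hsmall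
  have hlarge : 1 ≤ (a : ℝ) ^ n * ‖α - β‖ := by
    rwa [← inv_le_iff_one_le_mul₀' (by positivity)]
  have hbound : ‖a ^ n • (α - β)‖ ≤ 1 / 2 := by
    simpa using AddCircle.norm_le_half_period 1 one_ne_zero (x := a ^ n • (α - β))
  linarith

/-- If `a ≥ 2`, `α, β ∈ ℝ/ℤ` and `‖α - β‖ ≥ a^{-n}` for some `n ≥ 1` (where `‖·‖` is the
distance to the nearest integer), then there is `0 ≤ ℓ < n` with
`‖a^ℓ α - a^ℓ β‖ ≥ 1/(2a)`, where `a^ℓ α` is the `ℓ`-th iterate of the times-`a` map. -/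
theorem exists_iterate_separated (a : ℕ) (ha : 2 ≤ a) (α β : UnitAddCircle) (n : ℕ)
    (hn : 1 ≤ n) (h : ((a : ℝ) ^ n)⁻¹ ≤ ‖α - β‖) :
    ∃ ℓ < n, 1 / (2 * (a : ℝ)) ≤ ‖a ^ ℓ • α - a ^ ℓ • β‖ :=
  exists_iterate_separated_general a ha α β n h
end

section
/- Let 𝒟 = {n_k} be a pseudo-absolute value sequence with associated pseudo-absolute value |n|_𝒟 = min{1/n_k : n_k divides n}, and let ℳ(N) = max{k : n_k ≤ N}. Then ∑_{n=1}^N 1/|n|_𝒟 ≍ N·ℳ(N), i.e., there exist positive constants c₁, c₂ (independent of 𝒟 and N) with c₁·N·ℳ(N) ≤ ∑_{n=1}^N 1/|n|_𝒟 ≤ c₂·N·ℳ(N) for all N with ℳ(N) ≥ 1. -/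
/-- `Mfun nk N = max {k : nk k ≤ N}`. -/
noncomputable def Mfun (nk : ℕ → ℕ) (N : ℕ) : ℕ := sSup {k : ℕ | nk k ≤ N}

/-- `dabsInv nk n` is the largest element of the sequence `nk` dividing `n`,
i.e. `1/|n|_𝒟` for the pseudo-absolute value `|n|_𝒟 = min {nk k⁻¹ : nk k ∣ n}`. -/
noncomputable def dabsInv (nk : ℕ → ℕ) (n : ℕ) : ℕ := sSup {d : ℕ | ∃ k, d = nk k ∧ nk k ∣ n}

/-!
Let `M = ℳ(N)`. For `1 ≤ n ≤ N`, the terms `n_k ∣ n` with `k ≤ M` include the largest one,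
`1/|n|_𝒟`, and sum to at most twice it, because `n_k ∣ n_{k+1}` and `n_k < n_{k+1}` force
`2 n_k ≤ n_{k+1}`. Summing over `n` and exchanging the sums turns `∑_{n ≤ N} 1/|n|_𝒟`, up to a
factor `2`, into `∑_{k ≤ M} n_k ⌊N / n_k⌋`, whose `M + 1` terms all lie in `[N/2, N]` since
`n_k ≤ N`.
-/

open Finset

lemma Nat.two_mul_le_of_dvd_of_lt {a b : ℕ} (hdvd : a ∣ b) (hlt : a < b) : 2 * a ≤ b := by
  obtain ⟨m, rfl⟩ := hdvd
  have hm : 1 < m := by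
    by_contra! hm
    interval_cases m <;> omega
  rw [mul_comm]
  exact Nat.mul_le_mul_left a hm

lemma Nat.le_two_mul_mul_div {a N : ℕ} (ha : 0 < a) (haN : a ≤ N) : N ≤ 2 * (a * (N / a)) := by
  have hq : 1 ≤ N / a := (Nat.one_le_div_iff ha).mpr haN
  have := Nat.lt_mul_div_succ N ha
  nlinarith

lemma sum_range_succ_le_two_mul {f : ℕ → ℕ} (hf : ∀ k, 2 * f k ≤ f (k + 1)) (j : ℕ) :
    ∑ i ∈ range (j + 1), f i ≤ 2 * f j := by
  induction j with
  | zero => rw [sum_range_one]; omega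
  | succ j ih =>
    rw [sum_range_succ]
    linarith [hf j]

lemma sum_Icc_sum_filter_dvd (f : ℕ → ℕ) (s : Finset ℕ) (N : ℕ) :
    ∑ n ∈ Icc 1 N, ∑ k ∈ s with f k ∣ n, f k = ∑ k ∈ s, f k * (N / f k) := by
  simp_rw [sum_filter]
  rw [sum_comm]
  refine sum_congr rfl fun k _ => ?_
  rw [← sum_filter, sum_const, smul_eq_mul, mul_comm]
  exact congrArg (f k * ·) (Nat.Ioc_filter_dvd_card_eq_div N (f k))

lemma le_Mfun_iff {nk : ℕ → ℕ} {N k : ℕ} (hmono : StrictMono nk) (hM : 0 < Mfun nk N) :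
    k ≤ Mfun nk N ↔ nk k ≤ N := by
  have hbdd : BddAbove {k | nk k ≤ N} := ⟨N, fun k hk => hmono.le_apply.trans hk⟩
  have hne : {k | nk k ≤ N}.Nonempty := by
    by_contra hempty
    rw [Set.not_nonempty_iff_eq_empty] at hempty
    simp [Mfun, hempty] at hM
  exact ⟨fun hk => (hmono.monotone hk).trans (Nat.sSup_mem hne hbdd),
    fun hk => le_csSup hbdd hk⟩

section dabsInv

variable {nk : ℕ → ℕ} {n : ℕ}

lemma dabsInv_bddAbove (hn : n ≠ 0) : BddAbove {d | ∃ k, d = nk k ∧ nk k ∣ n} := by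
  refine ⟨n, ?_⟩
  rintro _ ⟨k, rfl, hk⟩
  exact Nat.le_of_dvd (Nat.pos_of_ne_zero hn) hk

lemma le_dabsInv (hn : n ≠ 0) {k : ℕ} (hk : nk k ∣ n) : nk k ≤ dabsInv nk n :=
  le_csSup (dabsInv_bddAbove hn) ⟨k, rfl, hk⟩

lemma exists_dabsInv_eq (h0 : nk 0 = 1) (hn : n ≠ 0) : ∃ j, dabsInv nk n = nk j ∧ nk j ∣ n :=
  Nat.sSup_mem (s := {d | ∃ k, d = nk k ∧ nk k ∣ n}) ⟨1, 0, h0.symm, h0 ▸ one_dvd n⟩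
    (dabsInv_bddAbove hn)

lemma dabsInv_le_sum_filter_dvd (h0 : nk 0 = 1) (hn : n ≠ 0) {M : ℕ}
    (hM : ∀ k, nk k ∣ n → k ≤ M) : dabsInv nk n ≤ ∑ k ∈ range (M + 1) with nk k ∣ n, nk k := by
  obtain ⟨j, hj, hjn⟩ := exists_dabsInv_eq h0 hn
  rw [hj]
  exact single_le_sum (fun _ _ => Nat.zero_le _)
    (mem_filter.mpr ⟨mem_range.mpr (Nat.lt_succ_of_le (hM j hjn)), hjn⟩)

end dabsInv

structure IsPseudoAbsValueSeq (nk : ℕ → ℕ) : Prop where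
  zero : nk 0 = 1
  strictMono : StrictMono nk
  dvd_succ : ∀ k, nk k ∣ nk (k + 1)

namespace IsPseudoAbsValueSeq

variable {nk : ℕ → ℕ}

lemma pos (h : IsPseudoAbsValueSeq nk) (k : ℕ) : 0 < nk k :=
  Nat.lt_of_lt_of_le (h.zero ▸ Nat.one_pos) (h.strictMono.monotone k.zero_le)

lemma two_mul_le_succ (h : IsPseudoAbsValueSeq nk) (k : ℕ) : 2 * nk k ≤ nk (k + 1) :=
  Nat.two_mul_le_of_dvd_of_lt (h.dvd_succ k) (h.strictMono (Nat.lt_succ_self k))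

lemma sum_filter_dvd_le_two_mul_dabsInv (h : IsPseudoAbsValueSeq nk) {n : ℕ} (hn : n ≠ 0)
    (M : ℕ) :
    ∑ k ∈ range (M + 1) with nk k ∣ n, nk k ≤ 2 * dabsInv nk n := by
  obtain ⟨j, hj, -⟩ := exists_dabsInv_eq h.zero hn
  have hsub : {k ∈ range (M + 1) | nk k ∣ n} ⊆ range (j + 1) := fun k hk => by
    have hkj : nk k ≤ nk j := hj ▸ le_dabsInv hn (mem_filter.mp hk).2
    exact mem_range.mpr (Nat.lt_succ_of_le (h.strictMono.le_iff_le.mp hkj))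
  calc ∑ k ∈ range (M + 1) with nk k ∣ n, nk k
      ≤ ∑ k ∈ range (j + 1), nk k := sum_le_sum_of_subset hsub
    _ ≤ 2 * dabsInv nk n := hj ▸ sum_range_succ_le_two_mul h.two_mul_le_succ j

lemma sum_dabsInv_le (h : IsPseudoAbsValueSeq nk) {N : ℕ} (hM : 0 < Mfun nk N) :
    ∑ n ∈ Icc 1 N, dabsInv nk n ≤ (Mfun nk N + 1) * N := by
  have hdiv : ∀ n ∈ Icc 1 N, ∀ k, nk k ∣ n → k ≤ Mfun nk N := fun n hn k hk =>
    (le_Mfun_iff h.strictMono hM).mpr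
      ((Nat.le_of_dvd (mem_Icc.mp hn).1 hk).trans (mem_Icc.mp hn).2)
  calc ∑ n ∈ Icc 1 N, dabsInv nk n
      ≤ ∑ n ∈ Icc 1 N, ∑ k ∈ range (Mfun nk N + 1) with nk k ∣ n, nk k :=
        sum_le_sum fun n hn =>
          dabsInv_le_sum_filter_dvd h.zero (Nat.one_le_iff_ne_zero.mp (mem_Icc.mp hn).1)
            (hdiv n hn)
    _ = ∑ k ∈ range (Mfun nk N + 1), nk k * (N / nk k) := sum_Icc_sum_filter_dvd ..
    _ ≤ ∑ _k ∈ range (Mfun nk N + 1), N := sum_le_sum fun k _ => Nat.mul_div_le N (nk k)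
    _ = (Mfun nk N + 1) * N := by rw [sum_const, card_range, smul_eq_mul]

lemma le_four_mul_sum_dabsInv (h : IsPseudoAbsValueSeq nk) {N : ℕ} (hM : 0 < Mfun nk N) :
    (Mfun nk N + 1) * N ≤ 4 * ∑ n ∈ Icc 1 N, dabsInv nk n := by
  have hterm : ∀ k ∈ range (Mfun nk N + 1), N ≤ 2 * (nk k * (N / nk k)) := fun k hk =>
    Nat.le_two_mul_mul_div (h.pos k)
      ((le_Mfun_iff h.strictMono hM).mp (Nat.lt_succ_iff.mp (mem_range.mp hk)))
  calc (Mfun nk N + 1) * N = ∑ _k ∈ range (Mfun nk N + 1), N := by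
        rw [sum_const, card_range, smul_eq_mul]
    _ ≤ 2 * ∑ k ∈ range (Mfun nk N + 1), nk k * (N / nk k) := by
        rw [mul_sum]; exact sum_le_sum hterm
    _ = 2 * ∑ n ∈ Icc 1 N, ∑ k ∈ range (Mfun nk N + 1) with nk k ∣ n, nk k := by
        rw [sum_Icc_sum_filter_dvd]
    _ ≤ 2 * ∑ n ∈ Icc 1 N, 2 * dabsInv nk n := by
        gcongr with n hn
        exact h.sum_filter_dvd_le_two_mul_dabsInv
          (Nat.one_le_iff_ne_zero.mp (mem_Icc.mp hn).1) _
    _ = 4 * ∑ n ∈ Icc 1 N, dabsInv nk n := by rw [← mul_sum]; ring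

end IsPseudoAbsValueSeq

/-- For any pseudo-absolute value sequence `𝒟 = {n_k}`,
`∑_{n=1}^N 1/|n|_𝒟 ≍ N·ℳ(N)` with implied constants independent of `𝒟` and `N`
(for all `N` with `ℳ(N) ≥ 1`). -/
theorem sum_dabsInv_asymp :
    ∃ c₁ c₂ : ℝ, 0 < c₁ ∧ 0 < c₂ ∧
      ∀ nk : ℕ → ℕ, nk 0 = 1 → StrictMono nk → (∀ k, nk k ∣ nk (k + 1)) →
        ∀ N : ℕ, 1 ≤ Mfun nk N →
          c₁ * N * Mfun nk N ≤ ∑ n ∈ Finset.Icc 1 N, (dabsInv nk n : ℝ) ∧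
          ∑ n ∈ Finset.Icc 1 N, (dabsInv nk n : ℝ) ≤ c₂ * N * Mfun nk N := by
  refine ⟨1 / 4, 2, by norm_num, by norm_num, fun nk h0 hmono hdvd N hM => ?_⟩
  have h : IsPseudoAbsValueSeq nk := ⟨h0, hmono, hdvd⟩
  have hlower : ((Mfun nk N + 1) * N : ℝ) ≤ 4 * ∑ n ∈ Icc 1 N, (dabsInv nk n : ℝ) := by
    exact_mod_cast h.le_four_mul_sum_dabsInv hM
  have hupper : ∑ n ∈ Icc 1 N, (dabsInv nk n : ℝ) ≤ (Mfun nk N + 1) * N := by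
    exact_mod_cast h.sum_dabsInv_le hM
  have hM' : (1 : ℝ) ≤ Mfun nk N := by exact_mod_cast hM
  have hN : (0 : ℝ) ≤ N := N.cast_nonneg
  constructor <;> nlinarith
end

section
/- For all N ∈ ℕ, |∑_{n=1}^N φ(n)/n − (6/π²)·N| ≤ C·log(N+1) for some absolute constant C > 0, where φ is the Euler totient function. -/
/-!
Möbius inversion of `∑_{d ∣ n} φ d = n` gives `φ(n)/n = ∑_{d ∣ n} μ(d)/d`, and swapping the order
of summation turns the left-hand side into `∑_{d ≤ N} (μ(d)/d) ⌊N/d⌋`. Replacing `⌊N/d⌋` by `N/d`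
costs at most the harmonic number `H_N ≤ 1 + log N`, and the resulting main term
`N ∑_{d ≤ N} μ(d)/d²` differs from `N/ζ(2) = 6N/π²` by at most `N ∑_{d > N} 1/d² ≤ 1`.
-/

open Finset ArithmeticFunction
open scoped ArithmeticFunction.Moebius LSeries.notation

theorem totient_div_self_eq_sum_moebius_div {R : Type*} [Field R] [CharZero R] {n : ℕ}
    (hn : n ≠ 0) : (n.totient : R) / n = ∑ d ∈ n.divisors, (μ d : R) / d := by
  have hinv := (sum_eq_iff_sum_mul_moebius_eq (R := R) (f := fun m ↦ (m.totient : R))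
    (g := fun m ↦ (m : R))).mp (fun m _ ↦ mod_cast m.sum_totient) n (Nat.pos_of_ne_zero hn)
  rw [Nat.sum_divisorsAntidiagonal (f := fun d e ↦ (μ d : R) * e)] at hinv
  rw [← hinv, sum_div]
  refine sum_congr rfl fun d hd ↦ ?_
  have hd0 : (d : R) ≠ 0 := by exact_mod_cast (Nat.pos_of_mem_divisors hd).ne'
  rw [Nat.cast_div (Nat.dvd_of_mem_divisors hd) hd0]
  field_simp

theorem sum_Icc_sum_divisors_eq_sum_div_smul {M : Type*} [AddCommMonoid M] (N : ℕ) (f : ℕ → M) :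
    ∑ n ∈ Icc 1 N, ∑ d ∈ n.divisors, f d = ∑ d ∈ Icc 1 N, (N / d) • f d := by
  rw [sum_comm' (t' := Icc 1 N) (s' := fun d ↦ {n ∈ Icc 1 N | d ∣ n})]
  · refine sum_congr rfl fun d _ ↦ ?_
    rw [sum_const, ← Nat.Ioc_filter_dvd_card_eq_div]
    rfl
  · intro n d
    simp only [mem_Icc, Nat.mem_divisors, mem_filter]
    constructor
    · rintro ⟨⟨hn1, hnN⟩, hdn, -⟩
      exact ⟨⟨⟨hn1, hnN⟩, hdn⟩, Nat.pos_of_dvd_of_pos hdn hn1, (Nat.le_of_dvd hn1 hdn).trans hnN⟩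
    · rintro ⟨⟨⟨hn1, hnN⟩, hdn⟩, -⟩
      exact ⟨⟨hn1, hnN⟩, hdn, by omega⟩

theorem abs_natCast_div_sub_div_lt_one {K : Type*} [Field K] [LinearOrder K]
    [IsStrictOrderedRing K] [FloorSemiring K] (m n : ℕ) : |((m / n : ℕ) : K) - (m : K) / n| < 1 := by
  rw [← Nat.floor_div_eq_div (K := K), abs_sub_lt_iff]
  constructor
  · linarith [Nat.floor_le (by positivity : (0 : K) ≤ m / n)]
  · linarith [Nat.lt_floor_add_one ((m : K) / n)]

theorem abs_sub_sum_range_le_inv_of_abs_le_inv_sq {f : ℕ → ℝ} {a : ℝ} (hf : HasSum f a)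
    {N : ℕ} (hN : N ≠ 0) (hbound : ∀ n, N < n → |f n| ≤ ((n : ℝ) ^ 2)⁻¹) :
    |a - ∑ n ∈ range (N + 1), f n| ≤ (N : ℝ)⁻¹ := by
  have hlim : Filter.Tendsto (fun M ↦ ∑ n ∈ range (M + 1), f n - ∑ n ∈ range (N + 1), f n)
      Filter.atTop (nhds (a - ∑ n ∈ range (N + 1), f n)) :=
    ((Filter.tendsto_add_atTop_iff_nat 1).2 hf.tendsto_sum_nat).sub_const _
  refine le_of_tendsto hlim.abs (Filter.eventually_atTop.2 ⟨N, fun M hM ↦ ?_⟩)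
  rw [← sum_Ico_eq_sub _ (by omega), Ico_add_one_add_one_eq_Ioc]
  calc |∑ n ∈ Ioc N M, f n|
      ≤ ∑ n ∈ Ioc N M, |f n| := abs_sum_le_sum_abs _ _
    _ ≤ ∑ n ∈ Ioc N M, ((n : ℝ) ^ 2)⁻¹ := sum_le_sum fun n hn ↦ hbound n (mem_Ioc.1 hn).1
    _ ≤ (N : ℝ)⁻¹ - (M : ℝ)⁻¹ := sum_Ioc_inv_sq_le_sub hN hM
    _ ≤ (N : ℝ)⁻¹ := sub_le_self _ (by positivity)

theorem hasSum_moebius_div_sq : HasSum (fun d ↦ (μ d : ℝ) / d ^ 2) (6 / Real.pi ^ 2) := by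
  have hs : 1 < (2 : ℂ).re := by norm_num
  have hL : L ↗μ 2 = 6 / (Real.pi : ℂ) ^ 2 := by
    rw [eq_inv_of_mul_eq_one_right (LSeries_zeta_mul_Lseries_moebius hs),
      LSeries_zeta_eq_riemannZeta hs, riemannZeta_two, inv_div]
  have hterm : LSeries.term ↗μ 2 = fun d ↦ (((μ d : ℝ) / d ^ 2 : ℝ) : ℂ) := by
    ext d
    rcases eq_or_ne d 0 with rfl | hd
    · simp
    · rw [LSeries.term_of_ne_zero hd, Complex.cpow_two]
      push_cast
      rfl
  have h := (LSeriesSummable_moebius_iff.mpr hs).LSeriesHasSum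
  rw [hL, LSeriesHasSum, hterm] at h
  exact_mod_cast h

theorem sum_totient_div_eq (N : ℕ) :
    ∑ n ∈ Icc 1 N, (n.totient : ℝ) / n =
      ∑ d ∈ Icc 1 N, (μ d : ℝ) / d * ((N / d : ℕ) - (N : ℝ) / d) +
        N * ∑ d ∈ Icc 1 N, (μ d : ℝ) / d ^ 2 := by
  rw [sum_congr rfl fun n hn ↦ totient_div_self_eq_sum_moebius_div (by grind),
    sum_Icc_sum_divisors_eq_sum_div_smul, mul_sum, ← sum_add_distrib]
  refine sum_congr rfl fun d hd ↦ ?_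
  have hd0 : (d : ℝ) ≠ 0 := Nat.cast_ne_zero.2 (by grind)
  rw [nsmul_eq_mul]
  field_simp
  ring

theorem abs_sum_moebius_div_mul_div_sub_div_le_harmonic (N : ℕ) :
    |∑ d ∈ Icc 1 N, (μ d : ℝ) / d * ((N / d : ℕ) - (N : ℝ) / d)| ≤ harmonic N := by
  calc |∑ d ∈ Icc 1 N, (μ d : ℝ) / d * ((N / d : ℕ) - (N : ℝ) / d)|
      ≤ ∑ d ∈ Icc 1 N, |(μ d : ℝ) / d * ((N / d : ℕ) - (N : ℝ) / d)| := abs_sum_le_sum_abs _ _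
    _ ≤ ∑ d ∈ Icc 1 N, (d : ℝ)⁻¹ := by
      refine sum_le_sum fun d _ ↦ ?_
      have hμ : |(μ d : ℝ)| ≤ 1 := mod_cast abs_moebius_le_one
      rw [abs_mul, abs_div, Nat.abs_cast, ← one_div]
      calc |(μ d : ℝ)| / d * |((N / d : ℕ) - (N : ℝ) / d)| ≤ 1 / d * 1 := by
            gcongr
            exact (abs_natCast_div_sub_div_lt_one N d).le
        _ = 1 / d := mul_one _
    _ = harmonic N := by rw [harmonic_eq_sum_Icc]; push_cast; rfl

theorem abs_sub_sum_moebius_div_sq_le {N : ℕ} (hN : N ≠ 0) :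
    |6 / Real.pi ^ 2 - ∑ d ∈ Icc 1 N, (μ d : ℝ) / d ^ 2| ≤ (N : ℝ)⁻¹ := by
  have hrange : ∑ d ∈ Icc 1 N, (μ d : ℝ) / d ^ 2 = ∑ d ∈ range (N + 1), (μ d : ℝ) / d ^ 2 :=
    sum_subset (fun d hd ↦ by grind) fun d _ hd ↦ by
      obtain rfl : d = 0 := by grind
      simp
  rw [hrange]
  refine abs_sub_sum_range_le_inv_of_abs_le_inv_sq hasSum_moebius_div_sq hN fun n _ ↦ ?_
  have hμ : |(μ n : ℝ)| ≤ 1 := mod_cast abs_moebius_le_one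
  rw [abs_div, abs_of_nonneg (sq_nonneg (n : ℝ)), div_eq_mul_inv]
  exact mul_le_of_le_one_left (by positivity) hμ

/-- There is an absolute constant `C > 0` with
`|∑_{n=1}^N φ(n)/n − (6/π²)·N| ≤ C·log(N+1)` for all `N ∈ ℕ`. -/
theorem totient_over_n_sum_asymp :
    ∃ C : ℝ, 0 < C ∧ ∀ N : ℕ,
      |(∑ n ∈ Finset.Icc 1 N, (Nat.totient n : ℝ) / n) - (6 / Real.pi ^ 2) * N| ≤
        C * Real.log (N + 1) := by
  refine ⟨4, by norm_num, fun N ↦ ?_⟩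
  rcases eq_or_ne N 0 with rfl | hN
  · simp
  have hN1 : (1 : ℝ) ≤ N := by exact_mod_cast Nat.one_le_iff_ne_zero.2 hN
  have hlog : Real.log N ≤ Real.log (N + 1) := Real.log_le_log (by linarith) (by linarith)
  have hlog2 : Real.log 2 ≤ Real.log (N + 1) := Real.log_le_log (by norm_num) (by linarith)
  have htail : |(N : ℝ) * (∑ d ∈ Icc 1 N, (μ d : ℝ) / d ^ 2 - 6 / Real.pi ^ 2)| ≤ 1 := by
    rw [abs_mul, Nat.abs_cast, abs_sub_comm]
    calc (N : ℝ) * |6 / Real.pi ^ 2 - ∑ d ∈ Icc 1 N, (μ d : ℝ) / d ^ 2| ≤ N * (N : ℝ)⁻¹ := by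
          gcongr
          exact abs_sub_sum_moebius_div_sq_le hN
      _ = 1 := mul_inv_cancel₀ (by positivity)
  rw [sum_totient_div_eq, add_sub_assoc, mul_comm _ (N : ℝ), ← mul_sub]
  calc _ ≤ (harmonic N : ℝ) + 1 :=
        (abs_add_le _ _).trans (add_le_add (abs_sum_moebius_div_mul_div_sub_div_le_harmonic N) htail)
    _ ≤ 1 + Real.log N + 1 := by grw [harmonic_le_one_add_log]
    _ ≤ 4 * Real.log (N + 1) := by linarith [Real.log_two_gt_d9]
end

section
/- Let n_k = ∏_{p ≤ 2^{k²}} p (the product over primes up to 2^{k²}). Then {n_k}_{k≥0} is a pseudo-absolute value sequence and ∑_{k=1}^∞ φ(n_k)/n_k < ∞, where φ is the Euler totient function. -/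
/-!
Each `n_k` is the primorial of `2^{k²}`, so `φ(n_k)/n_k = ∏_{p ≤ 2^{k²}} (1 - 1/p)`. Expanding
`∏_{p ≤ N} (1 - 1/p)⁻¹` as a sum over `N`-smooth numbers shows that it dominates the harmonic
sum `∑_{n ≤ N} 1/n ≥ log (N + 1)`; hence `φ(n_k)/n_k ≤ 1/(k² log 2)`, which is summable.
Bertrand's postulate supplies a new prime in `(2^{k²}, 2^{(k+1)²}]`, so the sequence is strictly
increasing.
-/

/-- The primorial-type sequence `n_k = ∏_{p ≤ 2^{k²}} p`. -/
def primorialSeq (k : ℕ) : ℕ := ∏ p ∈ Nat.primesBelow (2 ^ (k ^ 2) + 1), p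

open Finset Nat

lemma sum_Icc_inv_le_prod_primesLE (N : ℕ) :
    ∑ n ∈ Icc 1 N, (n : ℝ)⁻¹ ≤ ∏ p ∈ primesLE N, (1 - (p : ℝ)⁻¹)⁻¹ := by
  let f : ℕ →* ℝ := invMonoidHom.comp (Nat.castRingHom ℝ : ℕ →* ℝ)
  have hf {p : ℕ} (hp : p.Prime) : ‖f p‖ < 1 := by
    simpa [f, abs_inv] using inv_lt_one_of_one_lt₀ (Nat.one_lt_cast.mpr hp.one_lt)
  have hsmooth : ∀ n ∈ Icc 1 N, n ∈ (N + 1).smoothNumbers := fun n hn ↦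
    mem_smoothNumbers_of_lt (mem_Icc.mp hn).1 (Nat.lt_succ_of_le (mem_Icc.mp hn).2)
  have := sum_le_hasSum ((Icc 1 N).subtype (· ∈ (N + 1).smoothNumbers))
    (fun n _ ↦ inv_nonneg.mpr n.1.cast_nonneg)
    (EulerProduct.summable_and_hasSum_smoothNumbers_prod_primesBelow_geometric hf (N + 1)).2
  rwa [sum_subtype_of_mem (f ·) hsmooth] at this

lemma log_add_one_le_prod_primesLE (N : ℕ) :
    Real.log (N + 1) ≤ ∏ p ∈ primesLE N, (1 - (p : ℝ)⁻¹)⁻¹ :=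
  calc Real.log (N + 1) ≤ harmonic N := mod_cast log_add_one_le_harmonic N
    _ = ∑ n ∈ Icc 1 N, (n : ℝ)⁻¹ := by simp [harmonic_eq_sum_Icc]
    _ ≤ _ := sum_Icc_inv_le_prod_primesLE N

lemma Nat.totient_div_self_eq_prod_primeFactors (n : ℕ) (hn : n ≠ 0) :
    (φ n : ℝ) / n = ∏ p ∈ n.primeFactors, (1 - (p : ℝ)⁻¹) := by
  have := congrArg ((↑) : ℚ → ℝ) (totient_eq_mul_prod_factors n)
  push_cast at this
  rw [this, mul_div_cancel_left₀ _ (by exact_mod_cast hn)]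

lemma totient_primorial_div_primorial_le (N : ℕ) (hN : 0 < N) :
    (φ (primorial N) : ℝ) / primorial N ≤ (Real.log (N + 1))⁻¹ := by
  rw [totient_div_self_eq_prod_primeFactors _ (primorial_ne_zero N), primeFactors_primorial,
    ← inv_inv (∏ _ ∈ _, _), ← prod_inv_distrib]
  exact inv_anti₀ (Real.log_pos (by norm_cast; omega)) (log_add_one_le_prod_primesLE N)

lemma primorial_lt_primorial_two_mul (n : ℕ) (hn : n ≠ 0) : primorial n < primorial (2 * n) := by
  obtain ⟨p, hp, hnp, hp2n⟩ := exists_prime_lt_and_le_two_mul n hn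
  refine (primorial_mono (by omega)).lt_of_ne fun h ↦ ?_
  have := hp.dvd_primorial_iff.mpr hp2n
  rw [← h, hp.dvd_primorial_iff] at this
  omega

lemma primorialSeq_eq_primorial (k : ℕ) : primorialSeq k = primorial (2 ^ k ^ 2) := rfl

lemma two_mul_two_pow_sq_le_two_pow_succ_sq (k : ℕ) : 2 * 2 ^ k ^ 2 ≤ 2 ^ (k + 1) ^ 2 := by
  rw [← pow_succ']
  exact Nat.pow_le_pow_right two_pos (by nlinarith [Nat.zero_le k])

lemma primorialSeq_strictMono : StrictMono primorialSeq :=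
  strictMono_nat_of_lt_succ fun k ↦
    (primorial_lt_primorial_two_mul _ (by positivity)).trans_le
      (primorial_mono (two_mul_two_pow_sq_le_two_pow_succ_sq k))

lemma primorialSeq_dvd_succ (k : ℕ) : primorialSeq k ∣ primorialSeq (k + 1) :=
  primorial_dvd_primorial <|
    (Nat.le_mul_of_pos_left _ two_pos).trans (two_mul_two_pow_sq_le_two_pow_succ_sq k)

lemma totient_primorialSeq_div_le (k : ℕ) (hk : k ≠ 0) :
    (φ (primorialSeq k) : ℝ) / primorialSeq k ≤ (Real.log 2 * (k : ℝ) ^ 2)⁻¹ := by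
  have hlog : Real.log 2 * (k : ℝ) ^ 2 = Real.log (2 ^ k ^ 2 : ℕ) := by
    rw [Nat.cast_pow, Real.log_pow, Nat.cast_pow, Nat.cast_ofNat, mul_comm]
  rw [primorialSeq_eq_primorial, hlog]
  refine (totient_primorial_div_primorial_le _ (by positivity)).trans (inv_anti₀ ?_ ?_)
  · exact Real.log_pos (by exact_mod_cast Nat.one_lt_two_pow (pow_ne_zero 2 hk))
  · exact Real.log_le_log (by positivity) (by linarith)

/-- The sequence `n_k = ∏_{p ≤ 2^{k²}} p` is a pseudo-absolute value sequence
(strictly increasing, `n_0 = 1`, `n_k ∣ n_{k+1}`) for which `∑ φ(n_k)/n_k < ∞`. -/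
theorem primorial_seq_fails_condition :
    primorialSeq 0 = 1 ∧ StrictMono primorialSeq ∧
    (∀ k, primorialSeq k ∣ primorialSeq (k + 1)) ∧
    Summable (fun k : ℕ => (Nat.totient (primorialSeq k) : ℝ) / primorialSeq k) := by
  refine ⟨rfl, primorialSeq_strictMono, primorialSeq_dvd_succ, ?_⟩
  have hsum : Summable fun k : ℕ ↦ (Real.log 2 * (k : ℝ) ^ 2)⁻¹ := by
    simpa only [mul_inv] using (Real.summable_nat_pow_inv.mpr one_lt_two).mul_left (Real.log 2)⁻¹
  refine hsum.of_norm_bounded_eventually_nat ?_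
  filter_upwards [Filter.eventually_ne_atTop 0] with k hk
  rw [Real.norm_of_nonneg (by positivity)]
  exact totient_primorialSeq_div_le k hk
end

section
/- Let ψ : ℕ → ℝ be non-negative and decreasing, 𝒟 a pseudo-absolute value sequence, and suppose there exists an infinite increasing sequence {m_i} with ψ(m_i)/|m_i|_𝒟 ≥ 1/2 for all i. Then ∑_{n=1}^∞ ℳ(n)ψ(n) = ∞. -/
/-!
Since `1/|m|_𝒟 ≤ m`, the hypothesis gives `ψ(m_i) ≥ 1/(2 m_i)`. Every `n` in `(n_k, N]` has
`ℳ(n) ≥ k`, and `ψ(n) ≥ ψ(N)` there, so for `N ≥ 2 n_k` the partial sum up to `N` is at least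
`(N/2) · k · ψ(N)`. Taking `N = m_i ≥ 2 n_k` this is at least `k/4`, and `k` is arbitrary.
-/

open Finset

theorem Finset.sub_mul_le_sum_Icc_one {f : ℕ → ℝ} (hf : ∀ n, 0 ≤ f n) {a N : ℕ} {c : ℝ}
    (hc : ∀ n ∈ Ioc a N, c ≤ f n) : ((N - a : ℕ) : ℝ) * c ≤ ∑ n ∈ Icc 1 N, f n :=
  calc ((N - a : ℕ) : ℝ) * c = ∑ _n ∈ Ioc a N, c := by simp
    _ ≤ ∑ n ∈ Ioc a N, f n := sum_le_sum hc
    _ ≤ ∑ n ∈ Icc 1 N, f n := by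
      refine sum_le_sum_of_subset_of_nonneg (fun n hn => ?_) fun n _ _ => hf n
      rw [mem_Ioc] at hn
      rw [mem_Icc]
      omega

lemma le_Mfun {nk : ℕ → ℕ} (hmono : StrictMono nk) {k n : ℕ} (h : nk k ≤ n) : k ≤ Mfun nk n :=
  le_csSup ⟨n, fun _ hj => hmono.le_apply.trans hj⟩ h

lemma dabsInv_le {nk : ℕ → ℕ} (hmono : StrictMono nk) (n : ℕ) : dabsInv nk n ≤ n := by
  rcases Nat.eq_zero_or_pos n with rfl | hn
  · -- every `n_k` divides `0`, so the supremum is over an unbounded set and is `0` by convention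
    refine (Nat.sSup_of_not_bddAbove fun ⟨b, hb⟩ => ?_).le
    exact (hmono.le_apply (x := b + 1)).not_gt (Nat.lt_succ_of_le (hb ⟨b + 1, rfl, dvd_zero _⟩))
  · exact csSup_le' fun _ ⟨_, hd, hdvd⟩ => hd ▸ Nat.le_of_dvd hn hdvd

lemma sub_mul_le_sum_Mfun_mul {nk : ℕ → ℕ} (hmono : StrictMono nk) {ψ : ℕ → ℝ}
    (hψ0 : ∀ n, 0 ≤ ψ n) (hψ : Antitone ψ) (k N : ℕ) :
    ((N - nk k : ℕ) : ℝ) * (k * ψ N) ≤ ∑ n ∈ Icc 1 N, (Mfun nk n : ℝ) * ψ n := by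
  refine sub_mul_le_sum_Icc_one (fun n => by have := hψ0 n; positivity) fun n hn => ?_
  rw [mem_Ioc] at hn
  exact mul_le_mul (by exact_mod_cast le_Mfun hmono hn.1.le) (hψ hn.2) (hψ0 N) (Nat.cast_nonneg _)

theorem divergence_from_large_values_general (nk : ℕ → ℕ) (hmono : StrictMono nk)
    (ψ : ℕ → ℝ) (hψ0 : ∀ n, 0 ≤ ψ n) (hψ : Antitone ψ)
    (m : ℕ → ℕ) (hm : StrictMono m)
    (hlarge : ∀ i, (1 : ℝ) / 2 ≤ ψ (m i) * dabsInv nk (m i)) :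
    ∀ C : ℝ, ∃ N : ℕ, C ≤ ∑ n ∈ Finset.Icc 1 N, (Mfun nk n : ℝ) * ψ n := by
  intro C
  set k := ⌈4 * C⌉₊
  set N := m (2 * nk k)
  have hN : 2 * nk k ≤ N := hm.le_apply
  have hψN : 1 / 2 ≤ ψ N * N := (hlarge _).trans <|
    mul_le_mul_of_nonneg_left (by exact_mod_cast dabsInv_le hmono N) (hψ0 N)
  have hhalf : (N : ℝ) / 2 ≤ ((N - nk k : ℕ) : ℝ) := by
    have : 2 * (nk k : ℝ) ≤ N := by exact_mod_cast hN
    rw [Nat.cast_sub (by omega)]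
    linarith
  refine ⟨N, le_trans ?_ (sub_mul_le_sum_Mfun_mul hmono hψ0 hψ k N)⟩
  calc C ≤ k / 2 * (1 / 2) := by linarith [Nat.le_ceil (4 * C)]
    _ ≤ k / 2 * (ψ N * N) := by gcongr
    _ = N / 2 * (k * ψ N) := by ring
    _ ≤ _ := mul_le_mul_of_nonneg_right hhalf (mul_nonneg (Nat.cast_nonneg _) (hψ0 N))

/-- If `ψ` is non-negative decreasing, `𝒟` is a pseudo-absolute value sequence, and
`ψ(m_i)/|m_i|_𝒟 ≥ 1/2` along an infinite increasing sequence `{m_i}`, then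
`∑ ℳ(n)ψ(n) = ∞` (partial sums are unbounded). -/
theorem divergence_from_large_values (nk : ℕ → ℕ) (h0 : nk 0 = 1) (hmono : StrictMono nk)
    (hdvd : ∀ k, nk k ∣ nk (k + 1)) (ψ : ℕ → ℝ) (hψ0 : ∀ n, 0 ≤ ψ n) (hψ : Antitone ψ)
    (m : ℕ → ℕ) (hm : StrictMono m) (hm1 : ∀ i, 1 ≤ m i)
    (hlarge : ∀ i, (1 : ℝ) / 2 ≤ ψ (m i) * dabsInv nk (m i)) :
    ∀ C : ℝ, ∃ N : ℕ, C ≤ ∑ n ∈ Finset.Icc 1 N, (Mfun nk n : ℝ) * ψ n :=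
  divergence_from_large_values_general nk hmono ψ hψ0 hψ m hm hlarge
end
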